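/- arXiv:math/0209133 — 2 statements merged into one kernel-verified Lean document; each statement's English description precedes it below -/
import Mathlib

section
/- Every factor of a good word is good: if w = u·v·z for words u, v, z (u, z possibly empty) and w is a good word, then v is a good word. -/
open scoped BigOperators

noncomputable section

/-- The field `ℚ(q)` of rational functions over `ℚ`. -/
abbrev K : Type := RatFunc ℚ

/-- The indeterminate `q`. -/
abbrev qq : K := RatFunc.X

/-- Words on the alphabet `{w_1, …, w_r}` (the free monoid `M`). -/
abbrev Word (r : ℕ) := List (Fin r)

/-- The space `F` with basis the words, as finitely supported families of coefficients. -/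
abbrev FA (r : ℕ) := Word r →₀ K

variable {r : ℕ}

/-- `(|w|, |x|)` : the symmetric bilinear form evaluated on the degrees of two words,
where `p i j = (α_i, α_j)` is the form on simple roots. -/
def pairW (p : Fin r → Fin r → ℤ) (w x : Word r) : ℤ :=
  (w.map fun i => (x.map fun j => p i j).sum).sum

/-- Auxiliary q-shuffle on *reversed* words:
`shAux p w x` is the q-shuffle of `w.reverse` and `x.reverse`; it implements the recursion
`(w·a) * (x·b) = (w * (x·b))·a + q^{-(|w·a|,|b|)} ((w·a) * x)·b`, `w[] * x = x * w[] = x`. -/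
def shAux (p : Fin r → Fin r → ℤ) : Word r → Word r → FA r
  | [], x => Finsupp.single x.reverse 1
  | w, [] => Finsupp.single w.reverse 1
  | a :: w, b :: x =>
      Finsupp.mapDomain (fun u => u ++ [a]) (shAux p w (b :: x))
      + (qq ^ (-(pairW p (a :: w) [b]))) •
          Finsupp.mapDomain (fun u => u ++ [b]) (shAux p (a :: w) x)
  termination_by w x => w.length + x.length
  decreasing_by all_goals (first | (simp only [List.length_cons]; omega) | omega)

/-- The q-shuffle product `*` on `F`, extended bilinearly from words. -/
def shuffle (p : Fin r → Fin r → ℤ) (f g : FA r) : FA r :=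
  f.sum fun w c => g.sum fun x d => (c * d) • shAux p w.reverse x.reverse

/-- Membership in `𝒰`, the `ℚ(q)`-subalgebra of `(F, *)` generated by the letters `w_i`. -/
inductive InU (p : Fin r → Fin r → ℤ) : FA r → Prop
  | letter (i : Fin r) : InU p (Finsupp.single [i] 1)
  | one : InU p (Finsupp.single ([] : Word r) 1)
  | add : ∀ {f g : FA r}, InU p f → InU p g → InU p (f + g)
  | smul : ∀ (c : K) {f : FA r}, InU p f → InU p (c • f)
  | mul : ∀ {f g : FA r}, InU p f → InU p g → InU p (shuffle p f g)

/-- The degree of a word in `Q⁺`, recorded as the multiplicity of each simple root. -/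
def deg (w : Word r) : Fin r → ℕ := fun i => w.count i

/-- `f` is homogeneous of degree `ν`. -/
def Homog (f : FA r) (ν : Fin r → ℕ) : Prop := ∀ w ∈ f.support, deg w = ν

/-- Lexicographic order on words (a proper left factor is smaller than the word). -/
def wlt (w x : Word r) : Prop := List.Lex (· < ·) w x

def wle (w x : Word r) : Prop := wlt w x ∨ w = x

/-- `g` is the lexicographically largest word occurring (with nonzero coefficient) in `f`. -/
def IsMaxWord (f : FA r) (g : Word r) : Prop :=
  f g ≠ 0 ∧ ∀ w ∈ f.support, wle w g

/-- Good words: words of the form `max(u)` for a nonzero homogeneous `u ∈ 𝒰`. -/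
def IsGood (p : Fin r → Fin r → ℤ) (g : Word r) : Prop :=
  ∃ u : FA r, InU p u ∧ (∃ ν, Homog u ν) ∧ IsMaxWord u g

/-- The data of the Cartan matrix `[a_{ij}]` of a finite-dimensional complex simple
Lie algebra of rank `r`: an integral matrix with `2` on the diagonal and nonpositive
off-diagonal entries, symmetrizable by `d_i ∈ {1,2,3}`, whose symmetrization
`(α_i, α_j) = d_i a_{ij}` is positive definite, and which is indecomposable. -/
structure CartanData (r : ℕ) where
  a : Fin r → Fin r → ℤ
  d : Fin r → ℤ
  diag : ∀ i, a i i = 2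
  offdiag : ∀ i j, i ≠ j → a i j ≤ 0
  dval : ∀ i, d i = 1 ∨ d i = 2 ∨ d i = 3
  dsymm : ∀ i j, d i * a i j = d j * a j i
  posdef : ∀ v : Fin r → ℚ, v ≠ 0 → 0 < ∑ i, ∑ j, v i * v j * ((d i * a i j : ℤ) : ℚ)
  indec : ∀ s : Finset (Fin r), s.Nonempty → s ≠ Finset.univ →
    ∃ i ∈ s, ∃ j, j ∉ s ∧ a i j ≠ 0

/-- The symmetric bilinear form `(α_i, α_j) = d_i a_{ij}` on simple roots. -/
def CartanData.p (C : CartanData r) : Fin r → Fin r → ℤ := fun i j => C.d i * C.a i j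

/-!
Deleting a last letter, `f ↦ (y ↦ f (y ++ [i]))`, and deleting a first letter,
`f ↦ (y ↦ f (i :: y))`, are twisted derivations of the q-shuffle product (the second one via
the left-hand recursion of the shuffle, which follows from the defining right-hand one by
induction). Hence `𝒰` is stable under both, and under deleting any prefix `u` and suffix `z`.
Applied to a homogeneous `f ∈ 𝒰` with `max f = u ++ v ++ z`, this leaves a homogeneous element
of `𝒰` whose words `y` all have the length of `v`; for words of equal length,
`u ++ y ++ z ≤ u ++ v ++ z` forces `y ≤ v`, so its largest word is `v`.
-/

namespace QShuffle

open Finsupp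

variable (p : Fin r → Fin r → ℤ)

lemma qq_ne_zero : qq ≠ 0 := RatFunc.X_ne_zero

/-- For `c = (p · i)`, `weight c w = q^{-(|w|, α_i)}`. -/
def weight (c : Fin r → ℤ) (w : Word r) : K := qq ^ (-(w.map c).sum)

@[simp] lemma weight_nil (c : Fin r → ℤ) : weight c [] = 1 := by simp [weight]

@[simp] lemma weight_cons (c : Fin r → ℤ) (a : Fin r) (w : Word r) :
    weight c (a :: w) = qq ^ (-c a) * weight c w := by
  simp only [weight, List.map_cons, List.sum_cons, neg_add, zpow_add₀ qq_ne_zero]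

@[simp] lemma weight_append (c : Fin r → ℤ) (w x : Word r) :
    weight c (w ++ x) = weight c w * weight c x := by
  simp only [weight, List.map_append, List.sum_append, neg_add, zpow_add₀ qq_ne_zero]

lemma weight_eq_of_perm (c : Fin r → ℤ) {w x : Word r} (h : w.Perm x) :
    weight c w = weight c x := by
  rw [weight, weight, (h.map c).sum_eq]

def wordShuffle (w x : Word r) : FA r := shAux p w.reverse x.reverse

@[simp] lemma wordShuffle_nil_left (x : Word r) : wordShuffle p [] x = single x 1 := by
  simp [wordShuffle, shAux]

@[simp] lemma wordShuffle_nil_right (w : Word r) : wordShuffle p w [] = single w 1 := by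
  cases h : w.reverse <;> simp_all [wordShuffle, shAux]

lemma wordShuffle_append_singleton (w x : Word r) (a b : Fin r) :
    wordShuffle p (w ++ [a]) (x ++ [b]) =
      mapDomain (· ++ [a]) (wordShuffle p w (x ++ [b]))
        + weight (p · b) (w ++ [a]) • mapDomain (· ++ [b]) (wordShuffle p (w ++ [a]) x) := by
  simp [wordShuffle, shAux, pairW, weight, add_comm]


lemma mapDomain_cons_mapDomain_append (a c : Fin r) (f : FA r) :
    mapDomain (a :: ·) (mapDomain (· ++ [c]) f) =
      mapDomain (· ++ [c]) (mapDomain (a :: ·) f) := by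
  simp only [← mapDomain_comp]
  rfl

lemma wordShuffle_cons_cons (a b : Fin r) (w x : Word r) :
    wordShuffle p (a :: w) (b :: x) =
      weight (p a ·) (b :: x) • mapDomain (a :: ·) (wordShuffle p w (b :: x))
        + mapDomain (b :: ·) (wordShuffle p (a :: w) x) := by
  induction h : w.length + x.length using Nat.strong_induction_on generalizing w x with
  | _ n ih =>
  -- Expand every shuffle by its last letters; the induction hypothesis covers the shorter pairs.
  rcases w.eq_nil_or_concat' with rfl | ⟨w, c, rfl⟩ <;>
    rcases x.eq_nil_or_concat' with rfl | ⟨x, d, rfl⟩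
  · have e := wordShuffle_append_singleton p [] [] a b
    simp_all [add_comm]
  · have e1 := wordShuffle_append_singleton p [] (b :: x) a d
    have e2 := wordShuffle_append_singleton p [] x a d
    have e3 := ih _ (by simp [← h]) [] x rfl
    simp only [List.nil_append, List.cons_append, wordShuffle_nil_left] at e1 e2 e3 ⊢
    rw [e1, e2, e3]
    simp only [mapDomain_add, mapDomain_smul, mapDomain_single, mapDomain_cons_mapDomain_append,
      weight_cons, weight_append, weight_nil, smul_add, List.cons_append, smul_smul]
    ring_nf
    abel
  · have e1 := wordShuffle_append_singleton p (a :: w) [] c b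
    have e2 := wordShuffle_append_singleton p w [] c b
    have e3 := ih _ (by simp [← h]) w [] rfl
    simp only [List.nil_append, List.cons_append, wordShuffle_nil_right] at e1 e2 e3 ⊢
    rw [e1, e2, e3]
    simp only [mapDomain_add, mapDomain_smul, mapDomain_single, mapDomain_cons_mapDomain_append,
      weight_cons, weight_append, weight_nil, smul_add, List.cons_append, smul_smul]
    ring_nf
    abel
  · have e1 := wordShuffle_append_singleton p (a :: w) (b :: x) c d
    have e2 := ih _ (by simp [← h]) w (x ++ [d]) rfl
    have e3 := ih _ (by simp [← h]) (w ++ [c]) x rfl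
    have e4 := wordShuffle_append_singleton p w (b :: x) c d
    have e5 := wordShuffle_append_singleton p (a :: w) x c d
    simp only [List.cons_append] at e1 e4 e5 ⊢
    rw [e1, e2, e3, e4, e5]
    simp only [mapDomain_add, mapDomain_smul, mapDomain_cons_mapDomain_append,
      weight_cons, weight_append, weight_nil, smul_add, smul_smul]
    ring_nf
    abel

lemma support_shAux_perm (W X : Word r) : ∀ y ∈ (shAux p W X).support, y.Perm (W ++ X) := by
  induction W, X using shAux.induct with
  | case1 X =>
    intro y hy
    rw [shAux, support_single _ one_ne_zero, Finset.mem_singleton] at hy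
    exact hy ▸ List.reverse_perm X
  | case2 W hW =>
    intro y hy
    rw [shAux, support_single _ one_ne_zero, Finset.mem_singleton] at hy
    · simp [hy, List.reverse_perm]
    · exact hW
  | case3 a W b X ih₁ ih₂ =>
    intro y hy
    rw [shAux] at hy
    rcases Finset.mem_union.1 (support_add hy) with hy | hy
    · obtain ⟨u, hu, rfl⟩ := Finset.mem_image.1 (mapDomain_support hy)
      exact ((ih₁ u hu).append_right [a]).trans (List.perm_append_singleton _ _)
    · obtain ⟨u, hu, rfl⟩ := Finset.mem_image.1 (mapDomain_support (support_smul hy))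
      refine ((ih₂ u hu).append_right [b]).trans ?_
      rw [List.append_assoc]
      exact (List.perm_append_singleton _ _).append_left _

lemma support_wordShuffle_perm {w x y : Word r} (hy : y ∈ (wordShuffle p w x).support) :
    y.Perm (w ++ x) :=
  (support_shAux_perm p _ _ y hy).trans ((List.reverse_perm w).append (List.reverse_perm x))

def shuffleₗ : FA r →ₗ[K] FA r →ₗ[K] FA r :=
  linearCombination K fun w => linearCombination K fun x => wordShuffle p w x

lemma shuffle_eq_shuffleₗ (f g : FA r) : shuffle p f g = shuffleₗ p f g := by
  simp [shuffle, shuffleₗ, linearCombination_apply, Finsupp.sum, LinearMap.sum_apply,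
    Finset.smul_sum, mul_smul, wordShuffle]

@[simp] lemma shuffleₗ_single_single (w x : Word r) (c d : K) :
    shuffleₗ p (single w c) (single x d) = (c * d) • wordShuffle p w x := by
  simp [shuffleₗ, mul_smul, smul_comm c d]

@[simp] lemma shuffleₗ_one_left (g : FA r) : shuffleₗ p (single [] 1) g = g := by
  induction g using Finsupp.induction_linear <;> simp_all

@[simp] lemma shuffleₗ_one_right (f : FA r) : shuffleₗ p f (single [] 1) = f := by
  induction f using Finsupp.induction_linear <;> simp_all

/-- The twist in the Leibniz rules below: it makes the rule for homogeneous elements, with factor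
`q^{-(|f|, α_i)}`, hold for all elements. -/
def twist (c : Fin r → ℤ) : FA r →ₗ[K] FA r :=
  linearCombination K fun w => single w (weight c w)

@[simp] lemma twist_single (c : Fin r → ℤ) (w : Word r) (a : K) :
    twist c (single w a) = (weight c w * a) • single w 1 := by
  simp [twist, mul_comm]

lemma twist_apply (c : Fin r → ℤ) (f : FA r) (y : Word r) : twist c f y = weight c y * f y := by
  induction f using Finsupp.induction_linear with
  | zero => simp
  | add f g hf hg => simp [hf, hg, mul_add]
  | single w a => by_cases h : w = y <;> simp [h]

lemma twist_wordShuffle (c : Fin r → ℤ) (w x : Word r) :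
    twist c (wordShuffle p w x) = (weight c w * weight c x) • wordShuffle p w x := by
  ext y
  rw [twist_apply, Finsupp.smul_apply, smul_eq_mul]
  by_cases hy : y ∈ (wordShuffle p w x).support
  · rw [weight_eq_of_perm c (support_wordShuffle_perm p hy), weight_append]
  · simp [notMem_support_iff.1 hy]

lemma twist_shuffleₗ (c : Fin r → ℤ) (f g : FA r) :
    twist c (shuffleₗ p f g) = shuffleₗ p (twist c f) (twist c g) := by
  suffices (shuffleₗ p).compr₂ (twist c) = (shuffleₗ p).compl₁₂ (twist c) (twist c) from
    LinearMap.congr_fun₂ this f g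
  ext w x : 4
  simp [twist_wordShuffle, mul_comm]

def leftQuotient (u : Word r) : FA r →ₗ[K] FA r :=
  lcomapDomain (u ++ ·) (List.append_right_injective u)

def rightQuotient (z : Word r) : FA r →ₗ[K] FA r :=
  lcomapDomain (· ++ z) (List.append_left_injective z)

@[simp] lemma leftQuotient_apply (u : Word r) (f : FA r) (y : Word r) :
    leftQuotient u f y = f (u ++ y) := rfl

@[simp] lemma rightQuotient_apply (z : Word r) (f : FA r) (y : Word r) :
    rightQuotient z f y = f (y ++ z) := rfl

lemma leftQuotient_append (u₁ u₂ : Word r) (f : FA r) :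
    leftQuotient (u₁ ++ u₂) f = leftQuotient u₂ (leftQuotient u₁ f) := by
  ext y; simp

lemma rightQuotient_append (z₁ z₂ : Word r) (f : FA r) :
    rightQuotient (z₁ ++ z₂) f = rightQuotient z₁ (rightQuotient z₂ f) := by
  ext y; simp

lemma leftQuotient_mapDomain_cons (i a : Fin r) (f : FA r) :
    leftQuotient [i] (mapDomain (a :: ·) f) = if a = i then f else 0 := by
  ext y
  split_ifs with h
  · subst h
    exact mapDomain_apply List.cons_injective f y
  · exact mapDomain_of_notMem_range _ _ (by rintro ⟨u, hu⟩; simp_all)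

lemma rightQuotient_mapDomain_append (i a : Fin r) (f : FA r) :
    rightQuotient [i] (mapDomain (· ++ [a]) f) = if a = i then f else 0 := by
  ext y
  split_ifs with h
  · subst h
    exact mapDomain_apply (List.append_left_injective _) f y
  · exact mapDomain_of_notMem_range _ _ (by rintro ⟨u, hu⟩; simp_all)

@[simp] lemma leftQuotient_single_cons (i a : Fin r) (w : Word r) (c : K) :
    leftQuotient [i] (single (a :: w) c) = if a = i then single w c else 0 := by
  simpa using leftQuotient_mapDomain_cons i a (single w c)

@[simp] lemma rightQuotient_single_append (i a : Fin r) (w : Word r) (c : K) :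
    rightQuotient [i] (single (w ++ [a]) c) = if a = i then single w c else 0 := by
  simpa using rightQuotient_mapDomain_append i a (single w c)

@[simp] lemma leftQuotient_single_nil (i : Fin r) (c : K) :
    leftQuotient [i] (single [] c) = 0 := by
  ext y; simp

@[simp] lemma rightQuotient_single_nil (i : Fin r) (c : K) :
    rightQuotient [i] (single [] c) = 0 := by
  ext y; simp

lemma rightQuotient_singleton_wordShuffle (i : Fin r) (w x : Word r) :
    rightQuotient [i] (wordShuffle p w x) =
      shuffleₗ p (rightQuotient [i] (single w 1)) (single x 1)
        + shuffleₗ p (twist (p · i) (single w 1)) (rightQuotient [i] (single x 1)) := by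
  rcases w.eq_nil_or_concat' with rfl | ⟨w, a, rfl⟩
  · simp
  rcases x.eq_nil_or_concat' with rfl | ⟨x, b, rfl⟩
  · simp
  rw [wordShuffle_append_singleton, map_add, map_smul, rightQuotient_mapDomain_append,
    rightQuotient_mapDomain_append]
  split_ifs with ha hb hb <;> simp_all [-single_mul]

lemma rightQuotient_singleton_shuffleₗ (i : Fin r) (f g : FA r) :
    rightQuotient [i] (shuffleₗ p f g) =
      shuffleₗ p (rightQuotient [i] f) g
        + shuffleₗ p (twist (p · i) f) (rightQuotient [i] g) := by
  suffices (shuffleₗ p).compr₂ (rightQuotient [i]) =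
      (shuffleₗ p).compl₁₂ (rightQuotient [i]) LinearMap.id
        + (shuffleₗ p).compl₁₂ (twist (p · i)) (rightQuotient [i]) from
    LinearMap.congr_fun₂ this f g
  ext w x : 4
  simpa using rightQuotient_singleton_wordShuffle p i w x

lemma leftQuotient_singleton_wordShuffle (i : Fin r) (w x : Word r) :
    leftQuotient [i] (wordShuffle p w x) =
      shuffleₗ p (leftQuotient [i] (single w 1)) (twist (p i ·) (single x 1))
        + shuffleₗ p (single w 1) (leftQuotient [i] (single x 1)) := by
  rcases w with _ | ⟨a, w⟩
  · simp
  rcases x with _ | ⟨b, x⟩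
  · simp
  rw [wordShuffle_cons_cons, map_add, map_smul, leftQuotient_mapDomain_cons,
    leftQuotient_mapDomain_cons]
  split_ifs with ha hb hb <;> simp_all [-single_mul]

lemma leftQuotient_singleton_shuffleₗ (i : Fin r) (f g : FA r) :
    leftQuotient [i] (shuffleₗ p f g) =
      shuffleₗ p (leftQuotient [i] f) (twist (p i ·) g)
        + shuffleₗ p f (leftQuotient [i] g) := by
  suffices (shuffleₗ p).compr₂ (leftQuotient [i]) =
      (shuffleₗ p).compl₁₂ (leftQuotient [i]) (twist (p i ·))
        + (shuffleₗ p).compl₁₂ LinearMap.id (leftQuotient [i]) from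
    LinearMap.congr_fun₂ this f g
  ext w x : 4
  simpa using leftQuotient_singleton_wordShuffle p i w x

end QShuffle

open QShuffle Finsupp

namespace InU

variable {p : Fin r → Fin r → ℤ} {f : FA r}

lemma zero : InU p 0 := by
  simpa using InU.smul 0 (InU.one (p := p))

lemma twist (c : Fin r → ℤ) (hf : InU p f) : InU p (twist c f) := by
  induction hf with
  | letter i => simpa using InU.smul _ (InU.letter i)
  | one => simpa using InU.one (p := p)
  | add _ _ ihf ihg => simpa using ihf.add ihg
  | smul a _ ih => simpa using ih.smul a
  | mul _ _ ihf ihg =>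
    rw [shuffle_eq_shuffleₗ, twist_shuffleₗ, ← shuffle_eq_shuffleₗ]
    exact ihf.mul ihg

lemma rightQuotient_singleton (i : Fin r) (hf : InU p f) : InU p (rightQuotient [i] f) := by
  induction hf with
  | letter j =>
    rw [← List.nil_append [j], rightQuotient_single_append]
    split_ifs
    exacts [InU.one, zero]
  | one => simpa using zero
  | add _ _ ihf ihg => simpa using ihf.add ihg
  | smul a _ ih => simpa using ih.smul a
  | mul hf hg ihf ihg =>
    rw [shuffle_eq_shuffleₗ, rightQuotient_singleton_shuffleₗ, ← shuffle_eq_shuffleₗ,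
      ← shuffle_eq_shuffleₗ]
    exact (ihf.mul hg).add ((hf.twist _).mul ihg)

lemma leftQuotient_singleton (i : Fin r) (hf : InU p f) : InU p (leftQuotient [i] f) := by
  induction hf with
  | letter j =>
    rw [leftQuotient_single_cons]
    split_ifs
    exacts [InU.one, zero]
  | one => simpa using zero
  | add _ _ ihf ihg => simpa using ihf.add ihg
  | smul a _ ih => simpa using ih.smul a
  | mul hf hg ihf ihg =>
    rw [shuffle_eq_shuffleₗ, leftQuotient_singleton_shuffleₗ, ← shuffle_eq_shuffleₗ,
      ← shuffle_eq_shuffleₗ]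
    exact (ihf.mul (hg.twist _)).add (hf.mul ihg)

lemma rightQuotient (z : Word r) (hf : InU p f) : InU p (rightQuotient z f) := by
  induction z with
  | nil => convert hf; ext; simp
  | cons i z ih =>
    rw [← List.singleton_append, rightQuotient_append]
    exact ih.rightQuotient_singleton i

lemma leftQuotient (u : Word r) (hf : InU p f) : InU p (leftQuotient u f) := by
  induction u generalizing f with
  | nil => convert hf; ext; simp
  | cons i u ih =>
    rw [← List.singleton_append, leftQuotient_append]
    exact ih (hf.leftQuotient_singleton i)

end InU

lemma deg_append (w x : Word r) : deg (w ++ x) = deg w + deg x := by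
  funext i
  simp [deg, List.count_append]

lemma length_eq_of_deg_eq {w x : Word r} (h : deg w = deg x) : w.length = x.length :=
  (List.perm_iff_count.2 fun i => congrFun h i).length_eq

lemma Homog.rightQuotient {f : FA r} {ν : Fin r → ℕ} (hf : Homog f ν) (z : Word r) :
    Homog (rightQuotient z f) (ν - deg z) := fun y hy =>
  eq_tsub_of_add_eq (by rw [← deg_append]; exact hf _ (by simpa using hy))

lemma Homog.leftQuotient {f : FA r} {ν : Fin r → ℕ} (hf : Homog f ν) (u : Word r) :
    Homog (leftQuotient u f) (ν - deg u) := fun y hy =>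
  eq_tsub_of_add_eq (by rw [add_comm, ← deg_append]; exact hf _ (by simpa using hy))

lemma List.Lex.append_of_length_eq {α : Type*} {R : α → α → Prop} {l₁ l₂ : List α}
    (h : List.Lex R l₁ l₂) (hl : l₁.length = l₂.length) (t : List α) :
    List.Lex R (l₁ ++ t) (l₂ ++ t) := by
  induction h with
  | nil => simp at hl
  | rel hab => exact .rel hab
  | cons _ ih => exact .cons (ih (by simpa using hl))

lemma wle_of_wle_append_append {u y v z : Word r} (hl : y.length = v.length)
    (h : wle (u ++ y ++ z) (u ++ v ++ z)) : wle y v := by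
  unfold wle wlt at h ⊢
  rcases trichotomous (r := List.Lex (α := Fin r) (· < ·)) y v with hyv | rfl | hvy
  · exact Or.inl hyv
  · exact Or.inr rfl
  · have key := (hvy.append_of_length_eq hl.symm z).append_left _ u
    rw [← List.append_assoc, ← List.append_assoc] at key
    rcases h with h | h
    · exact absurd key (asymm h)
    · exact absurd (h ▸ key) (irrefl _)

lemma IsMaxWord.leftQuotient_rightQuotient {f : FA r} {ν : Fin r → ℕ} {u v z : Word r}
    (hf : Homog f ν) (h : IsMaxWord f (u ++ v ++ z)) :
    IsMaxWord (leftQuotient u (rightQuotient z f)) v := by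
  refine ⟨by simpa using h.1, fun y hy => wle_of_wle_append_append ?_ (h.2 _ ?_)⟩
  · have hdeg : deg (u ++ y ++ z) = deg (u ++ v ++ z) :=
      (hf _ (by simpa using hy)).trans (hf _ (mem_support_iff.2 h.1)).symm
    simpa using length_eq_of_deg_eq hdeg
  · simpa using hy

theorem factor_of_good_is_good_general {r : ℕ} (C : CartanData r)
    (u v z : Word r) (h : IsGood C.p (u ++ v ++ z)) :
    IsGood C.p v := by
  obtain ⟨f, hU, ⟨ν, hH⟩, hmax⟩ := h
  exact ⟨leftQuotient u (rightQuotient z f), (hU.rightQuotient z).leftQuotient u,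
    ⟨_, (hH.rightQuotient z).leftQuotient u⟩, hmax.leftQuotient_rightQuotient hH⟩

/-- Lemma 3.4: every factor of a good word is good. -/
theorem factor_of_good_is_good {r : ℕ} (hr : 1 ≤ r) (C : CartanData r)
    (u v z : Word r) (h : IsGood C.p (u ++ v ++ z)) :
    IsGood C.p v :=
  factor_of_good_is_good_general C u v z h
end
end

section
/- A word w is good if and only if Ξ(w) does not lie in the ℚ(q)-linear span of {Ξ(v) : v ∈ M, |v| = |w|, v > w}. -/
open scoped BigOperators

noncomputable section

variable {r : ℕ}

/-- `Ξ` on a word: the q-shuffle product of its letters. -/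
def xiWord (p : Fin r → Fin r → ℤ) : Word r → FA r
  | [] => Finsupp.single ([] : Word r) 1
  | i :: w => shuffle p (Finsupp.single [i] 1) (xiWord p w)

/-!
The coefficient of `x` in `Ξ(v)` is symmetric in `v` and `x`, and vanishes unless `x` is a
rearrangement of `v`. Since left multiplication by a letter is associative with the q-shuffle,
`𝒰` is the span of the `Ξ(v)`; by the symmetry, the coefficients of `u = ∑ c_v Ξ(v) ∈ 𝒰` are
`u(x) = Φ(Ξ(x))` for the linear form `Φ(f) = ∑ c_v f(v)`, and conversely every linear form `φ`
arises in this way on the words of a given degree. So `w = max(u)` for some homogeneous `u ∈ 𝒰`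
exactly when some linear form kills `Ξ(v)` for every larger `v` of the same degree but not `Ξ(w)`.
-/

section SymmetricFamily

variable {ι R : Type*} [CommSemiring R] {e : ι → ι →₀ R}

lemma exists_linearMap_apply_eq_of_mem_span (he : ∀ a b, e a b = e b a) {u : ι →₀ R}
    (hu : u ∈ Submodule.span R (Set.range e)) : ∃ Φ : (ι →₀ R) →ₗ[R] R, ∀ y, Φ (e y) = u y := by
  obtain ⟨c, rfl⟩ := Finsupp.mem_span_range_iff_exists_finsupp.mp hu
  refine ⟨c.sum fun a t => t • Finsupp.lapply a, fun y => ?_⟩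
  simp [Finsupp.sum_apply, he]

lemma sum_smul_apply_eq_of_symm (he : ∀ a b, e a b = e b a) (φ : (ι →₀ R) →ₗ[R] R)
    {N : Finset ι} {x : ι} (hx : (e x).support ⊆ N) :
    (∑ y ∈ N, φ (Finsupp.single y 1) • e y) x = φ (e x) := by
  have hexpand : ∑ y ∈ N, e x y • Finsupp.single y 1 = e x := by
    simp_rw [Finsupp.smul_single_one]
    exact ((e x).sum_of_support_subset hx _ (by simp)).symm.trans (e x).sum_single
  rw [← hexpand, map_sum, Finset.sum_apply']
  refine Finset.sum_congr rfl fun y _ => ?_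
  rw [Finsupp.smul_apply, map_smul, smul_eq_mul, smul_eq_mul, he, mul_comm]

end SymmetricFamily

variable {p : Fin r → Fin r → ℤ}

lemma qq_zpow_neg_add (m n : ℤ) : qq ^ (-(m + n)) = qq ^ (-m) * qq ^ (-n) := by
  rw [neg_add, zpow_add₀ RatFunc.X_ne_zero]

lemma pairW_append_left (u u' x : Word r) : pairW p (u ++ u') x = pairW p u x + pairW p u' x := by
  simp [pairW]

lemma pairW_append_right (u x x' : Word r) :
    pairW p u (x ++ x') = pairW p u x + pairW p u x' := by
  simp [pairW, List.sum_map_add]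

lemma pairW_singleton_singleton (a b : Fin r) : pairW p [a] [b] = p a b := by
  simp [pairW]

lemma pairW_perm_left {u u' : Word r} (h : u.Perm u') (x : Word r) :
    pairW p u x = pairW p u' x :=
  (h.map _).sum_eq

lemma pairW_perm_right (u : Word r) {x x' : Word r} (h : x.Perm x') :
    pairW p u x = pairW p u x' := by
  simp only [pairW, (h.map _).sum_eq]

/-- `shAux` works on reversed words; this is the q-shuffle `w * z` of two words as written. -/
def shuffleWord (p : Fin r → Fin r → ℤ) (w z : Word r) : FA r := shAux p w.reverse z.reverse

lemma shuffleWord_nil_left (z : Word r) : shuffleWord p [] z = Finsupp.single z 1 := by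
  simp [shuffleWord, shAux]

lemma shuffleWord_nil_right (w : Word r) : shuffleWord p w [] = Finsupp.single w 1 := by
  rcases w.reverse.eq_nil_or_concat with h | ⟨w', a, h⟩ <;> simp_all [shuffleWord, shAux]

lemma shuffleWord_snoc_snoc (a b : Fin r) (w z : Word r) :
    shuffleWord p (w ++ [a]) (z ++ [b]) =
      Finsupp.mapDomain (· ++ [a]) (shuffleWord p w (z ++ [b]))
      + qq ^ (-pairW p (w ++ [a]) [b]) •
          Finsupp.mapDomain (· ++ [b]) (shuffleWord p (w ++ [a]) z) := by
  simp only [shuffleWord, List.reverse_append, List.reverse_singleton, List.singleton_append]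
  rw [shAux, pairW_perm_left ((w.reverse_perm.cons a).trans (List.perm_append_singleton a w).symm)]

lemma shuffle_single_single (w x : Word r) (c d : K) :
    shuffle p (Finsupp.single w c) (Finsupp.single x d) = (c * d) • shuffleWord p w x := by
  simp [shuffle, shuffleWord]

lemma shuffle_add_left (f₁ f₂ g : FA r) :
    shuffle p (f₁ + f₂) g = shuffle p f₁ g + shuffle p f₂ g := by
  unfold shuffle
  rw [Finsupp.sum_add_index' (by simp)]
  intro w c₁ c₂
  simp only [add_mul, add_smul, Finsupp.sum_add]

lemma shuffle_add_right (f g₁ g₂ : FA r) :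
    shuffle p f (g₁ + g₂) = shuffle p f g₁ + shuffle p f g₂ := by
  unfold shuffle
  rw [← Finsupp.sum_add]
  congr 1; funext w c
  rw [Finsupp.sum_add_index' (by simp)]
  intro x d₁ d₂; rw [mul_add, add_smul]

lemma shuffle_smul_left (c : K) (f g : FA r) :
    shuffle p (c • f) g = c • shuffle p f g := by
  unfold shuffle
  rw [Finsupp.sum_smul_index' (by simp), Finsupp.smul_sum]
  congr 1; funext w b
  rw [Finsupp.smul_sum]
  congr 1; funext x d
  rw [smul_eq_mul, smul_smul, mul_assoc]

lemma shuffle_smul_right (c : K) (f g : FA r) :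
    shuffle p f (c • g) = c • shuffle p f g := by
  unfold shuffle
  rw [Finsupp.smul_sum]
  congr 1; funext w b
  rw [Finsupp.sum_smul_index' (by simp), Finsupp.smul_sum]
  congr 1; funext x d
  rw [smul_eq_mul, smul_smul, mul_left_comm]

lemma shuffle_zero_left (g : FA r) : shuffle p 0 g = 0 := by simp [shuffle]

lemma shuffle_one_left (f : FA r) : shuffle p (Finsupp.single [] 1) f = f := by
  induction f using Finsupp.induction_linear with
  | zero => simp [shuffle]
  | add f g hf hg => rw [shuffle_add_right, hf, hg]
  | single w c => simp [shuffle_single_single, shuffleWord_nil_left]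

lemma shuffle_one_right (f : FA r) : shuffle p f (Finsupp.single [] 1) = f := by
  induction f using Finsupp.induction_linear with
  | zero => exact shuffle_zero_left _
  | add f g hf hg => rw [shuffle_add_left, hf, hg]
  | single w c => simp [shuffle_single_single, shuffleWord_nil_right]

abbrev snocₗ (a : Fin r) : FA r →ₗ[K] FA r := Finsupp.lmapDomain K K (· ++ [a])

def lmul (p : Fin r → Fin r → ℤ) (i : Fin r) : FA r →ₗ[K] FA r where
  toFun := shuffle p (Finsupp.single [i] 1)
  map_add' := shuffle_add_right _
  map_smul' c := shuffle_smul_right c _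

/-- Rescales the word `y` by `q^{-(|y|, α_b)}`, the factor that the recursion for
`(w·a) * (z·b)` attaches to its second summand. -/
def weightRight (p : Fin r → Fin r → ℤ) (b : Fin r) : FA r →ₗ[K] FA r :=
  Finsupp.lsum K fun y => qq ^ (-pairW p y [b]) • Finsupp.lsingle y

lemma lmul_apply (i : Fin r) (f : FA r) : lmul p i f = shuffle p (Finsupp.single [i] 1) f := rfl

lemma weightRight_single (b : Fin r) (y : Word r) (c : K) :
    weightRight p b (Finsupp.single y c) = qq ^ (-pairW p y [b]) • Finsupp.single y c := by
  simp [weightRight]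

lemma snocₗ_single (a : Fin r) (y : Word r) (c : K) :
    snocₗ a (Finsupp.single y c) = Finsupp.single (y ++ [a]) c := by
  simp

lemma shuffle_snocₗ_single_snoc (a b : Fin r) (f : FA r) (z : Word r) :
    shuffle p (snocₗ a f) (Finsupp.single (z ++ [b]) 1) =
      snocₗ a (shuffle p f (Finsupp.single (z ++ [b]) 1))
      + snocₗ b (shuffle p (weightRight p b (snocₗ a f)) (Finsupp.single z 1)) := by
  induction f using Finsupp.induction_linear with
  | zero => simp [shuffle_zero_left]
  | add f g hf hg => simp only [map_add, shuffle_add_left, hf, hg]; abel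
  | single y c =>
    simp only [snocₗ_single, weightRight_single, shuffle_smul_left, shuffle_single_single,
      shuffleWord_snoc_snoc, map_smul, mul_one]
    simp [smul_smul, mul_comm]

lemma lmul_single_nil (i : Fin r) : lmul p i (Finsupp.single [] 1) = Finsupp.single [i] 1 :=
  shuffle_one_right _

lemma shuffleWord_singleton_snoc (i a : Fin r) (y : Word r) :
    shuffleWord p [i] (y ++ [a]) =
      Finsupp.single (y ++ [a] ++ [i]) 1 + qq ^ (-p i a) • snocₗ a (shuffleWord p [i] y) := by
  simpa [shuffleWord_nil_left, pairW] using shuffleWord_snoc_snoc (p := p) i a [] y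

lemma lmul_snocₗ (i a : Fin r) (f : FA r) :
    lmul p i (snocₗ a f) = qq ^ (-p i a) • snocₗ a (lmul p i f) + snocₗ i (snocₗ a f) := by
  induction f using Finsupp.induction_linear with
  | zero => simp
  | add f g hf hg => simp only [map_add, hf, hg, smul_add]; abel
  | single y c =>
    simp only [snocₗ_single, lmul_apply, shuffle_single_single, one_mul, shuffleWord_singleton_snoc,
      map_smul, smul_add]
    rw [add_comm, smul_smul, mul_comm, ← smul_smul, Finsupp.smul_single, smul_eq_mul, mul_one]

lemma weightRight_snocₗ (a b : Fin r) (f : FA r) :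
    weightRight p b (snocₗ a f) = qq ^ (-p a b) • snocₗ a (weightRight p b f) := by
  induction f using Finsupp.induction_linear with
  | zero => simp
  | add f g hf hg => simp only [map_add, hf, hg, smul_add]
  | single y c =>
    rw [snocₗ_single, weightRight_single, weightRight_single, map_smul, snocₗ_single, smul_smul,
      pairW_append_left, pairW_singleton_singleton, qq_zpow_neg_add, mul_comm]

lemma weightRight_shuffleWord_singleton (i b : Fin r) (y : Word r) :
    weightRight p b (shuffleWord p [i] y) =
      (qq ^ (-p i b) * qq ^ (-pairW p y [b])) • shuffleWord p [i] y := by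
  induction y using List.reverseRecOn with
  | nil => simp [shuffleWord_nil_right, weightRight_single, pairW]
  | append_singleton y a ih =>
    rw [shuffleWord_singleton_snoc, map_add, map_smul, weightRight_snocₗ, ih, weightRight_single]
    simp only [pairW_append_left, pairW_singleton_singleton, qq_zpow_neg_add, map_smul, smul_add,
      smul_smul]
    congr 2 <;> ring

lemma weightRight_lmul (i b : Fin r) (f : FA r) :
    weightRight p b (lmul p i f) = qq ^ (-p i b) • lmul p i (weightRight p b f) := by
  induction f using Finsupp.induction_linear with
  | zero => simp
  | add f g hf hg => simp only [map_add, hf, hg, smul_add]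
  | single y c =>
    simp only [lmul_apply, weightRight_single, shuffle_single_single,
      map_smul, weightRight_shuffleWord_singleton, smul_smul]
    ring_nf

lemma lmul_shuffle_single (i : Fin r) (z : Word r) :
    ∀ f : FA r, lmul p i (shuffle p f (Finsupp.single z 1)) =
      shuffle p (lmul p i f) (Finsupp.single z 1) := by
  induction z using List.reverseRecOn with
  | nil => simp [shuffle_one_right]
  | append_singleton z b ihz =>
    intro f
    induction f using Finsupp.induction_linear with
    | zero => simp [shuffle_zero_left]
    | add f g hf hg => simp only [shuffle_add_left, map_add, hf, hg]
    | single w c =>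
      rw [← Finsupp.smul_single_one, shuffle_smul_left, map_smul, map_smul, shuffle_smul_left]
      congr 1
      induction w using List.reverseRecOn with
      | nil => rw [shuffle_one_left, lmul_single_nil]; rfl
      | append_singleton w a ihw =>
        rw [← snocₗ_single, shuffle_snocₗ_single_snoc, map_add, lmul_snocₗ, lmul_snocₗ, ihw, ihz]
        simp only [lmul_snocₗ, map_add, map_smul, shuffle_add_left, shuffle_smul_left,
          shuffle_snocₗ_single_snoc, weightRight_snocₗ, weightRight_lmul]
        generalize qq ^ (-p i a) = x, qq ^ (-p a b) = y, qq ^ (-p i b) = t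
        simp only [smul_add, smul_smul]
        rw [show t * (y * x) = x * (y * t) by ring, show t * y = y * t by ring]
        abel

lemma lmul_shuffle (i : Fin r) (f g : FA r) :
    lmul p i (shuffle p f g) = shuffle p (lmul p i f) g := by
  induction g using Finsupp.induction_linear with
  | zero => simp [shuffle]
  | add g₁ g₂ h₁ h₂ => simp only [shuffle_add_right, map_add, h₁, h₂]
  | single z d =>
    rw [← Finsupp.smul_single_one, shuffle_smul_right, shuffle_smul_right, map_smul,
      lmul_shuffle_single]

section Span

open Submodule

lemma xiWord_cons (i : Fin r) (v : Word r) : xiWord p (i :: v) = lmul p i (xiWord p v) := rfl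

lemma xiWord_singleton (i : Fin r) : xiWord p [i] = Finsupp.single [i] 1 :=
  shuffle_one_right _

lemma lmul_mem_span_xiWord (i : Fin r) {f : FA r} (hf : f ∈ span K (Set.range (xiWord p))) :
    lmul p i f ∈ span K (Set.range (xiWord p)) := by
  have hmap := mem_map_of_mem (f := lmul p i) hf
  rw [map_span] at hmap
  refine span_mono ?_ hmap
  rintro _ ⟨_, ⟨v, rfl⟩, rfl⟩
  exact ⟨i :: v, rfl⟩

lemma shuffle_xiWord_mem_span (v : Word r) {g : FA r} (hg : g ∈ span K (Set.range (xiWord p))) :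
    shuffle p (xiWord p v) g ∈ span K (Set.range (xiWord p)) := by
  induction v with
  | nil => rwa [xiWord, shuffle_one_left]
  | cons i v ih => rw [xiWord_cons, ← lmul_shuffle]; exact lmul_mem_span_xiWord i ih

lemma shuffle_mem_span_xiWord {f g : FA r} (hf : f ∈ span K (Set.range (xiWord p)))
    (hg : g ∈ span K (Set.range (xiWord p))) : shuffle p f g ∈ span K (Set.range (xiWord p)) := by
  induction hf using span_induction with
  | mem f hf => obtain ⟨v, rfl⟩ := hf; exact shuffle_xiWord_mem_span v hg
  | zero => rw [shuffle_zero_left]; exact zero_mem _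
  | add f₁ f₂ _ _ h₁ h₂ => rw [shuffle_add_left]; exact add_mem h₁ h₂
  | smul c f _ h => rw [shuffle_smul_left]; exact smul_mem _ c h

lemma inU_iff_mem_span_xiWord {f : FA r} : InU p f ↔ f ∈ span K (Set.range (xiWord p)) := by
  constructor
  · intro hf
    induction hf with
    | letter i => exact subset_span ⟨[i], xiWord_singleton i⟩
    | one => exact subset_span ⟨[], rfl⟩
    | add _ _ hf hg => exact add_mem hf hg
    | smul c _ hf => exact smul_mem _ c hf
    | mul _ _ hf hg => exact shuffle_mem_span_xiWord hf hg
  · intro hf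
    induction hf using span_induction with
    | mem f hf =>
      obtain ⟨v, rfl⟩ := hf
      induction v with
      | nil => exact InU.one
      | cons i v ih => exact InU.mul (InU.letter i) ih
    | zero => simpa using InU.smul 0 (InU.one (p := p))
    | add _ _ _ _ h₁ h₂ => exact InU.add h₁ h₂
    | smul c _ _ h => exact InU.smul c h

end Span

lemma List.insertIdx_append_of_le_length {α : Type*} (a : α) {l : List α} {k : ℕ}
    (hk : k ≤ l.length) (t : List α) : (l ++ t).insertIdx k a = l.insertIdx k a ++ t := by
  induction l generalizing k with
  | nil => simp_all
  | cons b l ih => cases k <;> simp_all [List.insertIdx_succ_cons]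

lemma List.drop_succ_insertIdx {α : Type*} (a : α) {l : List α} {k : ℕ} (hk : k ≤ l.length) :
    (l.insertIdx k a).drop (k + 1) = l.drop k := by
  induction l generalizing k with
  | nil => simp_all
  | cons b l ih => cases k <;> simp_all [List.insertIdx_succ_cons]

lemma shuffleWord_singleton_left (i : Fin r) (z : Word r) :
    shuffleWord p [i] z = ∑ k ∈ Finset.range (z.length + 1),
      qq ^ (-pairW p [i] (z.drop k)) • Finsupp.single (z.insertIdx k i) 1 := by
  induction z using List.reverseRecOn with
  | nil => simp [shuffleWord_nil_right, pairW]
  | append_singleton z a ih =>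
    rw [shuffleWord_singleton_snoc, ih, map_sum, List.length_append, List.length_singleton,
      Finset.sum_range_succ _ (z.length + 1), add_comm, Finset.smul_sum]
    congr 1
    · refine Finset.sum_congr rfl fun k hk => ?_
      have hk : k ≤ z.length := Nat.lt_succ_iff.mp (Finset.mem_range.mp hk)
      rw [map_smul, snocₗ_single, smul_smul, List.drop_append_of_le_length hk,
        List.insertIdx_append_of_le_length i hk, pairW_append_right, qq_zpow_neg_add,
        pairW_singleton_singleton, mul_comm]
    · have hlast : (z ++ [a]).insertIdx (z.length + 1) i = z ++ [a] ++ [i] := by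
        simpa using List.insertIdx_length_self (l := z ++ [a]) (x := i)
      rw [List.drop_eq_nil_of_le (by simp), hlast]
      simp [pairW]

lemma List.insertIdx_eq_iff_of_le_length {α : Type*} {a : α} {l l' : List α} {k : ℕ}
    (hk : k ≤ l.length) : l.insertIdx k a = l' ↔ l'[k]? = some a ∧ l'.eraseIdx k = l := by
  constructor
  · rintro rfl
    simp [List.getElem?_insertIdx_self, hk]
  · rintro ⟨hx, rfl⟩
    obtain ⟨hkx, rfl⟩ := List.getElem?_eq_some_iff.mp hx
    exact List.insertIdx_eraseIdx_getElem hkx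

lemma shuffleWord_singleton_left_apply (i : Fin r) (z x : Word r) :
    shuffleWord p [i] z x = ∑ k ∈ Finset.range x.length,
      if x[k]? = some i ∧ x.eraseIdx k = z then qq ^ (-pairW p [i] (x.drop (k + 1))) else 0 := by
  rw [shuffleWord_singleton_left, Finset.sum_apply']
  by_cases hlen : x.length = z.length + 1
  · rw [hlen]
    refine Finset.sum_congr rfl fun k hk => ?_
    have hk : k ≤ z.length := Nat.lt_succ_iff.mp (Finset.mem_range.mp hk)
    rw [Finsupp.smul_apply, Finsupp.single_apply]
    by_cases h : z.insertIdx k i = x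
    · rw [if_pos h, if_pos ((List.insertIdx_eq_iff_of_le_length hk).mp h), ← h,
        List.drop_succ_insertIdx i hk, smul_eq_mul, mul_one]
    · rw [if_neg h, if_neg (mt (List.insertIdx_eq_iff_of_le_length hk).mpr h), smul_zero]
  · have hL : ∀ k ∈ Finset.range (z.length + 1),
        (qq ^ (-pairW p [i] (z.drop k)) • Finsupp.single (z.insertIdx k i) (1 : K)) x = 0 := by
      intro k hk
      have hk : k ≤ z.length := Nat.lt_succ_iff.mp (Finset.mem_range.mp hk)
      rw [Finsupp.smul_apply, Finsupp.single_apply, if_neg, smul_zero]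
      rintro rfl
      exact hlen (List.length_insertIdx_of_le_length hk i)
    have hR : ∀ k ∈ Finset.range x.length,
        (if x[k]? = some i ∧ x.eraseIdx k = z then qq ^ (-pairW p [i] (x.drop (k + 1))) else 0)
          = 0 := by
      intro k hk
      rw [if_neg]
      rintro ⟨-, rfl⟩
      exact hlen (List.length_eraseIdx_add_one (Finset.mem_range.mp hk)).symm
    rw [Finset.sum_eq_zero hL, Finset.sum_eq_zero hR]

lemma lmul_apply_apply (i : Fin r) (f : FA r) (x : Word r) :
    lmul p i f x = ∑ k ∈ Finset.range x.length,
      if x[k]? = some i then qq ^ (-pairW p [i] (x.drop (k + 1))) * f (x.eraseIdx k) else 0 := by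
  induction f using Finsupp.induction_linear with
  | zero => simp
  | add f g hf hg =>
    rw [map_add, Finsupp.add_apply, hf, hg, ← Finset.sum_add_distrib]
    refine Finset.sum_congr rfl fun k _ => ?_
    split_ifs <;> simp [mul_add]
  | single z c =>
    rw [lmul_apply, shuffle_single_single, one_mul, Finsupp.smul_apply, smul_eq_mul,
      shuffleWord_singleton_left_apply, Finset.mul_sum]
    refine Finset.sum_congr rfl fun k _ => ?_
    by_cases hx : x[k]? = some i <;> by_cases hz : x.eraseIdx k = z <;> simp [hx, hz, mul_comm]

lemma xiWord_cons_apply (i : Fin r) (v x : Word r) :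
    xiWord p (i :: v) x = ∑ k ∈ Finset.range x.length,
      if x[k]? = some i then qq ^ (-pairW p [i] (x.drop (k + 1))) * xiWord p v (x.eraseIdx k)
      else 0 :=
  lmul_apply_apply i _ x

lemma perm_of_xiWord_apply_ne_zero {v x : Word r} (h : xiWord p v x ≠ 0) : x.Perm v := by
  induction v generalizing x with
  | nil =>
    rw [xiWord, Finsupp.single_apply, ite_ne_right_iff] at h
    rw [← h.1]
  | cons i v ih =>
    rw [xiWord_cons_apply] at h
    obtain ⟨k, hk, hne⟩ := Finset.exists_ne_zero_of_sum_ne_zero h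
    split_ifs at hne with hx
    obtain ⟨hkx, rfl⟩ := List.getElem?_eq_some_iff.mp hx
    exact (List.getElem_cons_eraseIdx_perm hkx).symm.trans
      ((ih (right_ne_zero_of_mul hne)).cons _)
    exact absurd rfl hne

lemma xiWord_cons_apply_cons (i j : Fin r) (v x : Word r) :
    xiWord p (i :: v) (j :: x) =
      (∑ k ∈ Finset.range x.length, if x[k]? = some i then
        qq ^ (-pairW p [i] (x.drop (k + 1))) * xiWord p v (j :: x.eraseIdx k) else 0)
      + if j = i then qq ^ (-pairW p [i] x) * xiWord p v x else 0 := by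
  rw [xiWord_cons_apply, List.length_cons, Finset.sum_range_succ']
  simp [List.eraseIdx_cons_succ, eq_comm]

lemma ite_mul_xiWord_cons_apply (i j : Fin r) (v x : Word r) (k : ℕ) :
    (if x[k]? = some i then
        qq ^ (-pairW p [i] (x.drop (k + 1))) * xiWord p (j :: x.eraseIdx k) v else 0) =
      ∑ l ∈ Finset.range v.length, if x[k]? = some i ∧ v[l]? = some j then
        qq ^ (-pairW p [i] (x.drop (k + 1))) * qq ^ (-pairW p [j] (v.drop (l + 1))) *
          xiWord p (x.eraseIdx k) (v.eraseIdx l) else 0 := by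
  by_cases hx : x[k]? = some i
  · rw [if_pos hx, xiWord_cons_apply, Finset.mul_sum]
    refine Finset.sum_congr rfl fun l _ => ?_
    by_cases hv : v[l]? = some j
    · rw [if_pos hv, if_pos ⟨hx, hv⟩, mul_assoc]
    · rw [if_neg hv, if_neg fun h => hv h.2, mul_zero]
  · rw [if_neg hx]
    exact (Finset.sum_eq_zero fun l _ => if_neg fun h => hx h.1).symm

/-- Both sides expand to the sum over an occurrence of `i` in `x` and an occurrence of `j` in
`v`; the boundary terms agree because `Ξ(v)` is supported on the rearrangements of `v`. -/
theorem xiWord_apply_comm : ∀ v x : Word r, xiWord p v x = xiWord p x v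
  | [], [] => rfl
  | [], _ :: _ => by rw [xiWord_cons_apply]; simp [xiWord]
  | _ :: _, [] => by rw [xiWord_cons_apply]; simp [xiWord]
  | i :: v, j :: x => by
    rw [xiWord_cons_apply_cons, xiWord_cons_apply_cons]
    congr 1
    · trans ∑ k ∈ Finset.range x.length, ∑ l ∈ Finset.range v.length,
        if x[k]? = some i ∧ v[l]? = some j then
          qq ^ (-pairW p [i] (x.drop (k + 1))) * qq ^ (-pairW p [j] (v.drop (l + 1))) *
            xiWord p (x.eraseIdx k) (v.eraseIdx l) else 0
      · refine Finset.sum_congr rfl fun k _ => ?_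
        rw [xiWord_apply_comm v, ite_mul_xiWord_cons_apply]
      · rw [Finset.sum_comm]
        refine Finset.sum_congr rfl fun l _ => ?_
        rw [xiWord_apply_comm x, ite_mul_xiWord_cons_apply]
        refine Finset.sum_congr rfl fun k _ => ?_
        exact if_congr and_comm (by rw [xiWord_apply_comm (x.eraseIdx k)]; ring) rfl
    · by_cases hji : j = i
      · subst hji
        rw [if_pos rfl, if_pos rfl, xiWord_apply_comm v x]
        by_cases h0 : xiWord p x v = 0
        · simp [h0]
        · rw [pairW_perm_right _ (perm_of_xiWord_apply_ne_zero h0)]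
      · rw [if_neg hji, if_neg (Ne.symm hji)]
termination_by v x => v.length + x.length
decreasing_by
  all_goals simp only [List.length_cons, List.length_eraseIdx]; (try split_ifs) <;> omega

lemma wle_iff_le {v w : Word r} : wle v w ↔ v ≤ w := (le_iff_lt_or_eq (a := v) (b := w)).symm

lemma deg_eq_deg_iff_perm {v w : Word r} : deg v = deg w ↔ v.Perm w := by
  rw [List.perm_iff_count, funext_iff]
  rfl

lemma support_xiWord_subset_permutations {v w : Word r} (h : v.Perm w) :
    (xiWord p v).support ⊆ w.permutations.toFinset := fun x hx => by
  simpa using (perm_of_xiWord_apply_ne_zero (Finsupp.mem_support_iff.mp hx)).trans h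

lemma IsGood.xiWord_notMem_span {w : Word r} (hw : IsGood p w) :
    xiWord p w ∉ Submodule.span K
      {f : FA r | ∃ v : Word r, deg v = deg w ∧ wlt w v ∧ f = xiWord p v} := by
  obtain ⟨u, hu, -, huw, hmax⟩ := hw
  obtain ⟨Φ, hΦ⟩ :=
    exists_linearMap_apply_eq_of_mem_span xiWord_apply_comm (inU_iff_mem_span_xiWord.mp hu)
  have hker : Submodule.span K
      {f : FA r | ∃ v : Word r, deg v = deg w ∧ wlt w v ∧ f = xiWord p v} ≤ LinearMap.ker Φ := by
    refine Submodule.span_le.mpr ?_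
    rintro _ ⟨v, -, hwv, rfl⟩
    rw [SetLike.mem_coe, LinearMap.mem_ker, hΦ, ← Finsupp.notMem_support_iff]
    exact fun hv => not_le_of_gt hwv (wle_iff_le.mp (hmax v hv))
  exact fun hmem => huw (hΦ w ▸ hker hmem)

lemma isGood_of_xiWord_notMem_span {w : Word r} (h : xiWord p w ∉ Submodule.span K
      {f : FA r | ∃ v : Word r, deg v = deg w ∧ wlt w v ∧ f = xiWord p v}) :
    IsGood p w := by
  obtain ⟨φ, hφw, hφS⟩ := Submodule.exists_dual_map_eq_bot_of_notMem h inferInstance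
  set N := w.permutations.toFinset
  set u := ∑ y ∈ N, φ (Finsupp.single y 1) • xiWord p y
  have hNsupp : ∀ x ∈ N, (xiWord p x).support ⊆ N := fun x hx =>
    support_xiWord_subset_permutations (by simpa [N] using hx)
  have hu : ∀ x ∈ N, u x = φ (xiWord p x) := fun x hx =>
    sum_smul_apply_eq_of_symm xiWord_apply_comm φ (hNsupp x hx)
  have husupp : u.support ⊆ N := Finsupp.support_finsetSum.trans <|
    Finset.biUnion_subset.mpr fun y hy => Finsupp.support_smul.trans (hNsupp y hy)
  have hdeg : ∀ x ∈ u.support, deg x = deg w := fun x hx => by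
    simpa [deg_eq_deg_iff_perm, N] using husupp hx
  refine ⟨u, ?_, ⟨deg w, hdeg⟩, ?_, fun x hx => wle_iff_le.mpr (not_lt.mp fun hwx => ?_)⟩
  · exact inU_iff_mem_span_xiWord.mpr <|
      Submodule.sum_mem _ fun y _ => Submodule.smul_mem _ _ (Submodule.subset_span ⟨y, rfl⟩)
  · rwa [hu w (by simp [N])]
  · have hφx : φ (xiWord p x) = 0 :=
      LinearMap.le_ker_iff_map.mpr hφS (Submodule.subset_span ⟨x, hdeg x hx, hwx, rfl⟩)
    exact Finsupp.mem_support_iff.mp hx (hu x (husupp hx) ▸ hφx)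

theorem good_iff_xi_not_in_span_of_greater_general {r : ℕ} (C : CartanData r)
    (w : Word r) :
    IsGood C.p w ↔
      xiWord C.p w ∉ Submodule.span K
        {f : FA r | ∃ v : Word r, deg v = deg w ∧ wlt w v ∧ f = xiWord C.p v} :=
  ⟨IsGood.xiWord_notMem_span, isGood_of_xiWord_notMem_span⟩

/-- Lemma 4.3: a word `w` is good if and only if `Ξ(w)` is not a linear combination of
the `Ξ(v)` for words `v` of the same degree with `v > w`. -/
theorem good_iff_xi_not_in_span_of_greater {r : ℕ} (hr : 1 ≤ r) (C : CartanData r)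
    (w : Word r) :
    IsGood C.p w ↔
      xiWord C.p w ∉ Submodule.span K
        {f : FA r | ∃ v : Word r, deg v = deg w ∧ wlt w v ∧ f = xiWord C.p v} :=
  good_iff_xi_not_in_span_of_greater_general C w
end
end
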